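/- arXiv:1908.06609 — 4 statements merged into one kernel-verified Lean document; each statement's English description precedes it below -/
import Mathlib

section
/- Let κ: ℝ → ℝ be a real analytic function with κ(t + l) = κ(t) for all t, where l > 0. If the set of c ∈ [0,l) such that either κ(t) = κ(t + c) for all t ∈ ℝ or κ(t) = κ(c − t) for all t ∈ ℝ is infinite, then κ is constant. -/
/-- Let `κ : ℝ → ℝ` be a real analytic `l`-periodic function (`l > 0`).  If the set
of `c ∈ [0,l)` such that `κ(t) = κ(t+c)` for all `t` or `κ(t) = κ(c-t)` for all `t`
is infinite, then `κ` is constant. -/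
theorem infinitely_many_symmetries_implies_constant
    (l : ℝ) (hl : 0 < l) (κ : ℝ → ℝ)
    (hana : ∀ t, AnalyticAt ℝ κ t)
    (hper : ∀ t, κ (t + l) = κ t)
    (hinf : {c : ℝ | c ∈ Set.Ico 0 l ∧
      ((∀ t : ℝ, κ t = κ (t + c)) ∨ (∀ t : ℝ, κ t = κ (c - t)))}.Infinite) :
    ∀ s t : ℝ, κ s = κ t := by
  set S := {c : ℝ | c ∈ Set.Ico 0 l ∧
      ((∀ t : ℝ, κ t = κ (t + c)) ∨ (∀ t : ℝ, κ t = κ (c - t)))} with hS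
  -- every element of S satisfies κ c = κ 0
  have hval : ∀ c ∈ S, κ c = κ 0 := by
    rintro c ⟨-, h | h⟩
    · simpa using (h 0).symm
    · simpa using (h 0).symm
  -- S has an accumulation point
  obtain ⟨x₀, -, hx₀⟩ := hinf.exists_accPt_of_subset_isCompact (isCompact_Icc (a := 0) (b := l))
    (fun c hc => ⟨hc.1.1, hc.1.2.le⟩)
  rw [accPt_iff_frequently] at hx₀
  have hfreq : ∃ᶠ z in nhdsWithin x₀ {x₀}ᶜ, κ z = κ 0 := by
    rw [Filter.frequently_iff_forall_eventually_exists_and] at hx₀ ⊢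
    intro U hU
    rw [nhdsWithin, Filter.eventually_inf_principal] at hU
    obtain ⟨y, ⟨hyx, hyS⟩, hy⟩ := hx₀ hU
    exact ⟨y, hval y hyS, hy hyx⟩

  have hEq : ∀ x : ℝ, κ x = κ 0 := by
    have := AnalyticOnNhd.eq_of_frequently_eq (f := κ) (g := fun _ => κ 0)
      (fun z _ => hana z) (fun z _ => analyticAt_const) (z₀ := x₀) hfreq
    exact fun x => congrFun this x
  intro s t
  rw [hEq s, hEq t]
end

section
/- Let l > 0 and let {μ_s}_{s ∈ [0,l)} be a continuous one-parameter family of C^∞ functions on ℝ (i.e. (s,t) ↦ μ_s(t) is continuous and each μ_s is C^∞) satisfying μ_s(t + l) = μ_s(t) for all s and t. If μ_0 has no symmetries, then there exists ε > 0 such that for every s ∈ (0,ε), the function μ_s has no symmetries. -/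
open Filter Topology

/-- An `l`-periodic function `μ : ℝ → ℝ` has a symmetry if `μ(t) = μ(t+c)` for all
`t` for some `c ∈ (0,l)`, or `μ(t) = μ(c'-t)` for all `t` for some `c' ∈ [0,l)`. -/
def HasSymmetry (l : ℝ) (μ : ℝ → ℝ) : Prop :=
  (∃ c ∈ Set.Ioo 0 l, ∀ t : ℝ, μ t = μ (t + c)) ∨
  (∃ c' ∈ Set.Ico 0 l, ∀ t : ℝ, μ t = μ (c' - t))

/-- If an `l`-periodic function has a translation symmetry by some `c ∈ (0,l)`, then it
has a translation symmetry by some `d ∈ [l/3, 5l/6]`. -/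
private lemma shift_sym {l : ℝ} (hl : 0 < l) {μ : ℝ → ℝ}
    (hper : ∀ t, μ (t + l) = μ t) {c : ℝ} (hc : c ∈ Set.Ioo 0 l)
    (h : ∀ t : ℝ, μ t = μ (t + c)) :
    ∃ d ∈ Set.Icc (l/3) (5*l/6), ∀ t : ℝ, μ t = μ (t + d) := by
  obtain ⟨hc0, hcl⟩ := hc
  set c' := min c (l - c) with hc'def
  have hc'0 : 0 < c' := lt_min hc0 (by linarith)
  have hc'h : c' ≤ l/2 := by
    rcases le_total c (l/2) with h1 | h1
    · exact le_trans (min_le_left _ _) h1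
    · exact le_trans (min_le_right _ _) (by linarith)
  have hsym' : ∀ t : ℝ, μ t = μ (t + c') := by
    rcases min_cases c (l - c) with ⟨he, _⟩ | ⟨he, _⟩
    · intro t; rw [hc'def, he]; exact h t
    · intro t
      rw [hc'def, he]
      have h1 : t + (l - c) = (t - c) + l := by ring
      rw [h1, hper (t - c)]
      have h2 := h (t - c)
      rw [sub_add_cancel] at h2
      exact h2.symm
  by_cases h3 : l/3 < c'
  · exact ⟨c', ⟨le_of_lt h3, by linarith⟩, hsym'⟩
  · push_neg at h3
    have hsymn : ∀ n : ℕ, ∀ t : ℝ, μ t = μ (t + n * c') := by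
      intro n
      induction n with
      | zero => intro t; simp
      | succ k ih =>
        intro t
        calc μ t = μ (t + k * c') := ih t
          _ = μ (t + k * c' + c') := hsym' _
          _ = μ (t + (k + 1 : ℕ) * c') := by congr 1; push_cast; ring
    set k := ⌈l / (2 * c')⌉₊ with hk
    have hk1 : l / (2 * c') ≤ (k : ℝ) := Nat.le_ceil _
    have hk2 : (k : ℝ) < l / (2 * c') + 1 := Nat.ceil_lt_add_one (by positivity)
    have hdiv : l / (2 * c') * c' = l / 2 := by field_simp
    refine ⟨(k : ℝ) * c', ⟨?_, ?_⟩, hsymn k⟩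
    · nlinarith [mul_le_mul_of_nonneg_right hk1 hc'0.le]
    · nlinarith [mul_lt_mul_of_pos_right hk2 hc'0]

/-- Passing a pointwise limit through the family using joint continuity. -/
private lemma lim_eval {l : ℝ} (hl : 0 < l) {μ : ℝ → ℝ → ℝ}
    (hcont : ContinuousOn (fun q : ℝ × ℝ => μ q.1 q.2) (Set.Ico 0 l ×ˢ Set.univ))
    {a : ℕ → ℝ} (ha : ∀ n, a n ∈ Set.Ico 0 l) (ha0 : Tendsto a atTop (𝓝 0))
    {b : ℕ → ℝ} {t : ℝ} (hb : Tendsto b atTop (𝓝 t)) :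
    Tendsto (fun n => μ (a n) (b n)) atTop (𝓝 (μ 0 t)) := by
  have hmem : ((0 : ℝ), t) ∈ Set.Ico 0 l ×ˢ (Set.univ : Set ℝ) := ⟨⟨le_refl 0, hl⟩, trivial⟩
  have hc := hcont _ hmem
  have hq : Tendsto (fun n => (a n, b n)) atTop
      (𝓝[Set.Ico 0 l ×ˢ (Set.univ : Set ℝ)] (0, t)) :=
    tendsto_nhdsWithin_of_tendsto_nhds_of_eventually_within _ (ha0.prodMk_nhds hb)
      (Filter.Eventually.of_forall fun n => ⟨ha n, trivial⟩)
  exact (Filter.Tendsto.comp hc hq : _)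

/-- Let `{μ_s}_{s ∈ [0,l)}` be a continuous one-parameter family of `C^∞` functions
on `ℝ`, each `l`-periodic.  If `μ_0` has no symmetries, then there exists `ε > 0`
such that `μ_s` has no symmetries for every `s ∈ (0, ε)`. -/
theorem no_symmetry_is_open_in_family
    (l : ℝ) (hl : 0 < l) (μ : ℝ → ℝ → ℝ)
    (hcont : ContinuousOn (fun q : ℝ × ℝ => μ q.1 q.2) (Set.Ico 0 l ×ˢ Set.univ))
    (hsmooth : ∀ s ∈ Set.Ico 0 l, ContDiff ℝ (⊤ : ℕ∞) (μ s))
    (hper : ∀ s ∈ Set.Ico 0 l, ∀ t : ℝ, μ s (t + l) = μ s t)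
    (h0 : ¬ HasSymmetry l (μ 0)) :
    ∃ ε : ℝ, 0 < ε ∧ ε ≤ l ∧ ∀ s ∈ Set.Ioo 0 ε, ¬ HasSymmetry l (μ s) := by
  by_contra hcon
  push_neg at hcon
  have key : ∀ n : ℕ, ∃ s ∈ Set.Ioo 0 (l / (n + 1)), HasSymmetry l (μ s) := by
    intro n
    refine hcon (l / (n + 1)) (by positivity) ?_
    rw [div_le_iff₀ (by positivity)]
    nlinarith [Nat.cast_nonneg (α := ℝ) n]
  choose s hs hsym using key
  have hsmem : ∀ n, s n ∈ Set.Ico 0 l := by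
    intro n
    refine ⟨(hs n).1.le, lt_of_lt_of_le (hs n).2 ?_⟩
    apply div_le_self hl.le
    have : (0 : ℝ) ≤ (n : ℝ) := Nat.cast_nonneg n
    linarith
  have hs0 : Tendsto s atTop (𝓝 0) := by
    have hden : Tendsto (fun n : ℕ => (n : ℝ) + 1) atTop atTop :=
      tendsto_atTop_add_const_right _ 1 tendsto_natCast_atTop_atTop
    have hln : Tendsto (fun n : ℕ => l / ((n : ℝ) + 1)) atTop (𝓝 0) :=
      Filter.Tendsto.div_atTop tendsto_const_nhds hden
    exact squeeze_zero (fun n => (hs n).1.le) (fun n => (hs n).2.le) hln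
  set P : ℕ → Prop := fun n =>
    ∃ d ∈ Set.Icc (l/3) (5*l/6), ∀ t : ℝ, μ (s n) t = μ (s n) (t + d) with hP
  set Q : ℕ → Prop := fun n =>
    ∃ c ∈ Set.Icc (0:ℝ) l, ∀ t : ℝ, μ (s n) t = μ (s n) (c - t) with hQ
  have hPQ : ∀ n, P n ∨ Q n := by
    intro n
    rcases hsym n with ⟨c, hc, hcs⟩ | ⟨c, hc, hcs⟩
    · exact Or.inl (shift_sym hl (fun t => hper (s n) (hsmem n) t) hc hcs)
    · exact Or.inr ⟨c, ⟨hc.1, hc.2.le⟩, hcs⟩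
  rcases Filter.frequently_or_distrib.mp
      ((Filter.Frequently.of_forall hPQ : ∃ᶠ n in atTop, P n ∨ Q n)) with hF | hF
  · -- translation case
    obtain ⟨φ, hφ, hPφ⟩ := Filter.extraction_of_frequently_atTop hF
    choose d hd hds using hPφ
    obtain ⟨d0, hd0, ψ, hψ, hdlim⟩ := isCompact_Icc.tendsto_subseq hd
    have hslim : Tendsto (fun n => s (φ (ψ n))) atTop (𝓝 0) :=
      hs0.comp ((hφ.comp hψ).tendsto_atTop)
    have hsym0 : ∀ t : ℝ, μ 0 t = μ 0 (t + d0) := by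
      intro t
      have h1 : Tendsto (fun n => μ (s (φ (ψ n))) t) atTop (𝓝 (μ 0 t)) :=
        lim_eval hl hcont (fun n => hsmem _) hslim tendsto_const_nhds
      have h2 : Tendsto (fun n => μ (s (φ (ψ n))) (t + d (ψ n))) atTop (𝓝 (μ 0 (t + d0))) :=
        lim_eval hl hcont (fun n => hsmem _) hslim (tendsto_const_nhds.add hdlim)
      have heq : (fun n => μ (s (φ (ψ n))) t) = fun n => μ (s (φ (ψ n))) (t + d (ψ n)) := by
        funext n; exact hds (ψ n) t
      rw [heq] at h1
      exact tendsto_nhds_unique h1 h2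
    exact h0 (Or.inl ⟨d0, ⟨by linarith [hd0.1], by linarith [hd0.2]⟩, hsym0⟩)
  · -- reflection case
    obtain ⟨φ, hφ, hQφ⟩ := Filter.extraction_of_frequently_atTop hF
    choose c hc hcs using hQφ
    obtain ⟨c0, hc0, ψ, hψ, hclim⟩ := isCompact_Icc.tendsto_subseq hc
    have hslim : Tendsto (fun n => s (φ (ψ n))) atTop (𝓝 0) :=
      hs0.comp ((hφ.comp hψ).tendsto_atTop)
    have hsym0 : ∀ t : ℝ, μ 0 t = μ 0 (c0 - t) := by
      intro t
      have h1 : Tendsto (fun n => μ (s (φ (ψ n))) t) atTop (𝓝 (μ 0 t)) :=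
        lim_eval hl hcont (fun n => hsmem _) hslim tendsto_const_nhds
      have h2 : Tendsto (fun n => μ (s (φ (ψ n))) (c (ψ n) - t)) atTop (𝓝 (μ 0 (c0 - t))) :=
        lim_eval hl hcont (fun n => hsmem _) hslim (hclim.sub tendsto_const_nhds)
      have heq : (fun n => μ (s (φ (ψ n))) t) = fun n => μ (s (φ (ψ n))) (c (ψ n) - t) := by
        funext n; exact hcs (ψ n) t
      rw [heq] at h1
      exact tendsto_nhds_unique h1 h2
    rcases lt_or_eq_of_le hc0.2 with hlt | heq
    · exact h0 (Or.inr ⟨c0, ⟨hc0.1, hlt⟩, hsym0⟩)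
    · refine h0 (Or.inr ⟨0, ⟨le_refl 0, hl⟩, fun t => ?_⟩)
      have hp := hper 0 ⟨le_refl 0, hl⟩ (-t)
      have : c0 - t = -t + l := by rw [heq]; ring
      rw [hsym0 t, this, hp]
      norm_num
end

section
/- Let γ: ℝ → ℝ³ be an l-periodic real analytic curve parametrized by arc-length, injective on [0,l), with positive curvature κ(t) = ‖γ''(t)‖ for all t, and let C be its image. If T is a Euclidean isometry of ℝ³ with T(C) = C such that T(P) ≠ P for some point P ∈ C, then the curvature function κ has a symmetry: there exist σ ∈ {1,−1} and c ∈ ℝ with (σ,c) not inducing the identity reparametrization (i.e. not both σ = 1 and c ∈ lℤ) such that κ(t) = κ(σt + c) for all t ∈ ℝ. -/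
noncomputable section

/-- Euclidean 3-space. -/
abbrev R3 : Type := EuclideanSpace ℝ (Fin 3)

/-- The curvature function `κ(t) = ‖γ''(t)‖` of a unit-speed curve. -/
def curvature (γ : ℝ → R3) (t : ℝ) : ℝ := ‖deriv (deriv γ) t‖

/-!
The isometry `T` moves `γ` to a second unit-speed parametrization `T ∘ γ` of the same closed
curve `C`. Since `γ` descends to a homeomorphism from the circle `ℝ/lℤ` onto `C`, the map
`T ∘ γ` lifts through the covering `ℝ → ℝ/lℤ`: `T ∘ γ = γ ∘ g` for a continuous `g : ℝ → ℝ`.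
Regularity of `γ` makes `g` differentiable, comparing speeds gives `|g'| = 1`, and by Darboux
`g' ≡ σ ∈ {1, -1}`, so `g t = σ t + c`. Curvature is invariant under isometries and under such
reparametrizations, whence `κ(t) = κ(σ t + c)`; if `σ = 1` and `c ∈ lℤ` then `T` would fix `C`
pointwise, contradicting `T P ≠ P`.
-/

open Set Function Topology

namespace Function.Periodic

theorem injective_lift {X : Type*} {γ : ℝ → X} {l : ℝ} (hl : 0 < l) (hper : Periodic γ l)
    (hinj : InjOn γ (Ico 0 l)) : Injective hper.lift := by
  have := Fact.mk hl
  intro x y hxy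
  rw [← AddCircle.coe_equivIco (a := 0) (y := x), ← AddCircle.coe_equivIco (a := 0) (y := y)]
    at hxy ⊢
  have hmem : ∀ z : AddCircle l, (AddCircle.equivIco l 0 z : ℝ) ∈ Ico 0 l := fun z => by
    simpa using (AddCircle.equivIco l 0 z).2
  rw [hper.lift_coe, hper.lift_coe] at hxy
  rw [hinj (hmem x) (hmem y) hxy]

variable {X : Type*} [TopologicalSpace X] {γ : ℝ → X} {l : ℝ}

theorem continuous_lift (hper : Periodic γ l) (hγ : Continuous γ) : Continuous hper.lift :=
  (QuotientAddGroup.isQuotientMap_mk _).continuous_iff.2 hγ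

theorem exists_continuous_lift_of_range_subset [T2Space X] (hl : 0 < l) (hper : Periodic γ l)
    (hγ : Continuous γ) (hinj : InjOn γ (Ico 0 l)) {δ : ℝ → X} (hδ : Continuous δ)
    (hδγ : range δ ⊆ range γ) : ∃ g : ℝ → ℝ, Continuous g ∧ γ ∘ g = δ := by
  have := Fact.mk hl
  have hemb := (hper.continuous_lift hγ).isClosedEmbedding (hper.injective_lift hl hinj)
  choose s hs using fun t => hδγ (mem_range_self t)
  have hψ : Continuous fun t => (s t : AddCircle l) :=
    hemb.isEmbedding.continuous_iff.2 (by simpa [comp_def, hs] using hδ)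
  obtain ⟨F, ⟨-, hF⟩, -⟩ := (AddCircle.isCoveringMap_coe l).existsUnique_continuousMap_lifts
    ⟨_, hψ⟩ 0 (s 0) rfl
  refine ⟨F, F.continuous, funext fun t => ?_⟩
  have hFt := congrFun hF t
  simp only [comp_apply, ContinuousMap.coe_mk] at hFt
  rw [comp_apply, ← hper.lift_coe, hFt, hper.lift_coe, hs]

end Function.Periodic

section Reparametrization

variable {E : Type*} [NormedAddCommGroup E] [InnerProductSpace ℝ E] {γ δ : ℝ → E} {g : ℝ → ℝ}
  {t : ℝ}

theorem differentiableAt_of_comp_eventuallyEq {γ' : E} (hγ : HasStrictDerivAt γ γ' (g t))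
    (hγ' : γ' ≠ 0) (hg : ContinuousAt g t) (hδ : DifferentiableAt ℝ δ t)
    (hγg : γ ∘ g =ᶠ[𝓝 t] δ) : DifferentiableAt ℝ g t := by
  -- Pairing with `γ'` gives a scalar function with nonzero derivative, which we invert locally.
  have hf : HasStrictDerivAt (fun s => inner ℝ γ' (γ s)) (inner ℝ γ' γ') (g t) :=
    (innerSL ℝ γ').hasStrictFDerivAt.comp_hasStrictDerivAt (g t) hγ
  have hf' : inner ℝ γ' γ' ≠ 0 := inner_self_ne_zero.2 hγ'
  have hF := (hf.to_localInverse hf').hasDerivAt.differentiableAt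
  rw [← comp_apply (f := γ), hγg.self_of_nhds] at hF
  refine (hF.comp t ((innerSL ℝ γ').differentiableAt.comp t hδ)).congr_of_eventuallyEq ?_
  filter_upwards [hg.eventually (hf.eventually_left_inverse hf'), hγg] with s hs hs'
  rw [← hs]
  simp [← hs']

theorem abs_deriv_eq_one_of_comp_eventuallyEq (hγ : DifferentiableAt ℝ γ (g t))
    (hγu : ‖deriv γ (g t)‖ = 1) (hg : DifferentiableAt ℝ g t) (hδu : ‖deriv δ t‖ = 1)
    (hγg : γ ∘ g =ᶠ[𝓝 t] δ) : |deriv g t| = 1 := by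
  have h := (hγ.hasDerivAt.scomp t hg.hasDerivAt).deriv
  rw [hγg.deriv_eq] at h
  rwa [h, norm_smul, hγu, mul_one, Real.norm_eq_abs] at hδu

theorem exists_eq_mul_add_of_abs_deriv_eq_one (hg : Differentiable ℝ g)
    (hg' : ∀ t, |deriv g t| = 1) : ∃ σ c : ℝ, (σ = 1 ∨ σ = -1) ∧ ∀ t, g t = σ * t + c := by
  -- By Darboux, `g'` cannot take both values `1` and `-1` without also taking the value `0`.
  have hconst : ∀ s, deriv g s = deriv g 0 := by
    intro s
    rcases abs_eq_abs.1 ((hg' s).trans (hg' 0).symm) with h | h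
    · exact h
    obtain ⟨u, -, hu⟩ := convex_univ.image_deriv (fun x _ => hg x)
      (mem_image_of_mem _ (mem_univ s)) (mem_image_of_mem _ (mem_univ 0))
      (by norm_num : (0 : ℝ) ≤ 1 / 2) (by norm_num : (0 : ℝ) ≤ 1 / 2) (by norm_num)
    have hu1 := hg' u
    rw [hu, h] at hu1
    norm_num at hu1
  refine ⟨deriv g 0, g 0, (abs_eq zero_le_one).1 (hg' 0), fun t => ?_⟩
  have hzero : ∀ s, deriv (fun s => g s - deriv g 0 * s) s = 0 := fun s => by
    rw [deriv_fun_sub (hg s) (by fun_prop), hconst]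
    simp
  have h := is_const_of_deriv_eq_zero (by fun_prop) hzero t 0
  simp only [mul_zero, sub_zero] at h
  linarith

theorem exists_eq_comp_mul_add_of_comp_eq (hγ : ∀ s, HasStrictDerivAt γ (deriv γ s) s)
    (hγu : ∀ s, ‖deriv γ s‖ = 1) (hδ : Differentiable ℝ δ) (hδu : ∀ t, ‖deriv δ t‖ = 1)
    (hg : Continuous g) (hγg : γ ∘ g = δ) :
    ∃ σ c : ℝ, (σ = 1 ∨ σ = -1) ∧ ∀ t, δ t = γ (σ * t + c) := by
  have hγ' : ∀ s, deriv γ s ≠ 0 := fun s => norm_ne_zero_iff.1 (by simp [hγu])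
  have hγg' : ∀ t, γ ∘ g =ᶠ[𝓝 t] δ := fun t => .of_eq hγg
  have hgd : Differentiable ℝ g := fun t =>
    differentiableAt_of_comp_eventuallyEq (hγ (g t)) (hγ' _) hg.continuousAt (hδ t) (hγg' t)
  obtain ⟨σ, c, hσ, hgσ⟩ := exists_eq_mul_add_of_abs_deriv_eq_one hgd fun t =>
    abs_deriv_eq_one_of_comp_eventuallyEq (hγ (g t)).hasDerivAt.differentiableAt (hγu _) (hgd t)
      (hδu t) (hγg' t)
  exact ⟨σ, c, hσ, fun t => by rw [← hγg, comp_apply, hgσ]⟩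

end Reparametrization

theorem LinearIsometryEquiv.deriv_comp {𝕜 E F : Type*} [NontriviallyNormedField 𝕜]
    [NormedAddCommGroup E] [NormedSpace 𝕜 E] [NormedAddCommGroup F] [NormedSpace 𝕜 F]
    (L : E ≃ₗᵢ[𝕜] F) (f : 𝕜 → E) (t : 𝕜) : deriv (L ∘ f) t = L (deriv f t) := by
  change fderiv 𝕜 (L ∘ f) t 1 = L (fderiv 𝕜 f t 1)
  rw [L.comp_fderiv]
  rfl

namespace IsometryEquiv

variable {E F : Type*} [NormedAddCommGroup E] [NormedSpace ℝ E] [NormedAddCommGroup F]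
  [NormedSpace ℝ F]

theorem eq_linearIsometryEquiv_add (T : E ≃ᵢ F) :
    ⇑T = fun x => T.toRealAffineIsometryEquiv.linearIsometryEquiv x + T 0 := by
  simpa [funext_iff] using T.toRealAffineIsometryEquiv.toAffineEquiv.toAffineMap.decomp

theorem differentiable (T : E ≃ᵢ F) : Differentiable ℝ T := by
  rw [T.eq_linearIsometryEquiv_add]
  fun_prop

theorem deriv_comp (T : E ≃ᵢ F) (f : ℝ → E) :
    deriv (T ∘ f) = T.toRealAffineIsometryEquiv.linearIsometryEquiv ∘ deriv f := by
  funext t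
  rw [T.eq_linearIsometryEquiv_add]
  exact (deriv_add_const _).trans (LinearIsometryEquiv.deriv_comp _ f t)

end IsometryEquiv

theorem deriv_comp_mul_add {E : Type*} [NormedAddCommGroup E] [NormedSpace ℝ E] (f : ℝ → E)
    (σ c t : ℝ) : deriv (fun s => f (σ * s + c)) t = σ • deriv f (σ * t + c) := by
  rw [deriv_comp_mul_left σ (fun x => f (x + c)) t, deriv_comp_add_const]

theorem curvature_comp_mul_add (γ : ℝ → R3) (σ c t : ℝ) :
    curvature (fun s => γ (σ * s + c)) t = σ ^ 2 * curvature γ (σ * t + c) := by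
  have hd : deriv (fun s => γ (σ * s + c)) = fun s => σ • deriv γ (σ * s + c) :=
    funext (deriv_comp_mul_add γ σ c)
  rw [curvature, curvature, hd, deriv_fun_const_smul_field, deriv_comp_mul_add, norm_smul,
    norm_smul, Real.norm_eq_abs, ← mul_assoc, ← sq, sq_abs]

theorem curvature_isometryEquiv_comp (T : R3 ≃ᵢ R3) (γ : ℝ → R3) (t : ℝ) :
    curvature (T ∘ γ) t = curvature γ t := by
  rw [curvature, curvature, T.deriv_comp, LinearIsometryEquiv.deriv_comp,
    LinearIsometryEquiv.norm_map]

theorem curve_symmetry_induces_curvature_symmetry_general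
    (l : ℝ) (hl : 0 < l) (γ : ℝ → R3)
    (hγ : ∀ t, AnalyticAt ℝ γ t) (hper : ∀ t, γ (t + l) = γ t)
    (hinj : Set.InjOn γ (Set.Ico 0 l)) (hunit : ∀ t, ‖deriv γ t‖ = 1)
    (T : R3 ≃ᵢ R3) (hT : T '' Set.range γ = Set.range γ)
    (P : R3) (hP : P ∈ Set.range γ) (hTP : T P ≠ P) :
    ∃ σ c : ℝ, (σ = 1 ∨ σ = -1) ∧ ¬ (σ = 1 ∧ ∃ k : ℤ, c = k * l) ∧
      ∀ t : ℝ, curvature γ t = curvature γ (σ * t + c) := by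
  have hγc : Continuous γ := continuous_iff_continuousAt.2 fun t => (hγ t).continuousAt
  obtain ⟨g, hg, hγg⟩ := Function.Periodic.exists_continuous_lift_of_range_subset hl hper hγc
    hinj (T.continuous.comp hγc) (by rw [range_comp, hT])
  obtain ⟨σ, c, hσ, hTγ⟩ := exists_eq_comp_mul_add_of_comp_eq (fun s => (hγ s).hasStrictDerivAt)
    hunit (T.differentiable.comp fun t => (hγ t).differentiableAt)
    (fun t => by rw [T.deriv_comp, comp_apply, LinearIsometryEquiv.norm_map, hunit]) hg hγg
  refine ⟨σ, c, hσ, ?_, fun t => ?_⟩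
  · rintro ⟨rfl, k, rfl⟩
    obtain ⟨t, rfl⟩ := hP
    exact hTP ((hTγ t).trans (by rw [one_mul]; exact Function.Periodic.int_mul hper k t))
  · have hσ2 : σ ^ 2 = 1 := by rcases hσ with rfl | rfl <;> norm_num
    rw [← curvature_isometryEquiv_comp T, funext hTγ, curvature_comp_mul_add, hσ2, one_mul]

/-- Let `γ : ℝ → ℝ³` be an `l`-periodic real analytic unit-speed curve, injective on
`[0,l)`, with positive curvature, and let `C` be its image.  If `T` is a Euclidean
isometry of `ℝ³` with `T(C) = C` and `T(P) ≠ P` for some `P ∈ C`, then the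
curvature function has a symmetry: there exist `σ ∈ {1,-1}` and `c ∈ ℝ`, not both
`σ = 1` and `c ∈ lℤ` (so that `t ↦ σt + c` is not the identity reparametrization),
with `κ(t) = κ(σt + c)` for all `t`. -/
theorem curve_symmetry_induces_curvature_symmetry
    (l : ℝ) (hl : 0 < l) (γ : ℝ → R3)
    (hγ : ∀ t, AnalyticAt ℝ γ t) (hper : ∀ t, γ (t + l) = γ t)
    (hinj : Set.InjOn γ (Set.Ico 0 l)) (hunit : ∀ t, ‖deriv γ t‖ = 1)
    (hcurv : ∀ t, 0 < curvature γ t)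
    (T : R3 ≃ᵢ R3) (hT : T '' Set.range γ = Set.range γ)
    (P : R3) (hP : P ∈ Set.range γ) (hTP : T P ≠ P) :
    ∃ σ c : ℝ, (σ = 1 ∨ σ = -1) ∧ ¬ (σ = 1 ∧ ∃ k : ℤ, c = k * l) ∧
      ∀ t : ℝ, curvature γ t = curvature γ (σ * t + c) :=
  curve_symmetry_induces_curvature_symmetry_general l hl γ hγ hper hinj hunit T hT P hP hTP
end
end

section
/- Let γ: ℝ → ℝ³ be a C^ω, l-periodic, unit-speed curve (‖γ'(t)‖ = 1 for all t) that is injective on [0,l), such that ‖γ''(t)‖ = κ₀ for all t for some constant κ₀ > 0, and such that det(γ'(t), γ''(t), γ'''(t)) = c₀ for all t for some constant c₀ (so that γ has constant curvature and constant torsion). Then c₀ = 0 and the image of γ is a circle contained in a plane of ℝ³. -/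
noncomputable section

/-- The determinant `det(a, b, c)` of three vectors of `ℝ³`. -/
def det3 (a b c : R3) : ℝ :=
  a 0 * (b 1 * c 2 - b 2 * c 1) - a 1 * (b 0 * c 2 - b 2 * c 0)
    + a 2 * (b 0 * c 1 - b 1 * c 0)

/-!
Write `T = γ'`, `N = γ''` (so `‖N‖ = κ₀`) and `B = T × N`. Expanding `N'` in the orthogonal frame
`T, N, B` gives the Frenet equation `N' = -κ₀² T + (c₀/κ₀²) B`, and then the Darboux vector
`D = (c₀/κ₀²) T + B` is constant. Hence `⟪γ, D⟫` grows linearly with slope `⟪T, D⟫ = c₀/κ₀²`,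
which periodicity forces to vanish. Once `c₀ = 0`, `N' = -κ₀² T`, so `C = γ + N/κ₀²` is a fixed
point and `γ - C` solves `x'' = -κ₀² x`: `γ` runs around the circle of radius `1/κ₀` about `C` in
the plane spanned by `T(0)` and `N(0)`.
-/

open WithLp Real Matrix
open scoped RealInnerProductSpace

namespace R3

/-- Mathlib's `crossProduct` on `EuclideanSpace`, bundled as a continuous bilinear map so that the
product rule `ContinuousLinearMap.hasDerivAt_of_bilinear` applies to it. -/
def cross : R3 →L[ℝ] R3 →L[ℝ] R3 :=
  let e := WithLp.linearEquiv 2 ℝ (Fin 3 → ℝ)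
  LinearMap.toContinuousLinearMap <| LinearMap.toContinuousLinearMap.toLinearMap ∘ₗ
    (crossProduct.compl₁₂ e.toLinearMap e.toLinearMap).compr₂ e.symm.toLinearMap

theorem cross_def (a b : R3) : cross a b = toLp 2 (ofLp a ⨯₃ ofLp b) := rfl

theorem inner_eq_dotProduct (a b : R3) : ⟪a, b⟫ = ofLp a ⬝ᵥ ofLp b := by
  simp [EuclideanSpace.inner_eq_star_dotProduct, dotProduct_comm]

theorem inner_self_cross (a b : R3) : ⟪a, cross a b⟫ = 0 := by
  simp [inner_eq_dotProduct, cross_def, dot_self_cross]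

theorem inner_cross_self (a b : R3) : ⟪b, cross a b⟫ = 0 := by
  simp [inner_eq_dotProduct, cross_def, dot_cross_self]

theorem cross_self (a : R3) : cross a a = 0 := by
  simp [cross_def]

theorem cross_cross (a b c : R3) : cross a (cross b c) = ⟪a, c⟫ • b - ⟪a, b⟫ • c := by
  simp [cross_def, inner_eq_dotProduct, cross_cross_eq_smul_sub_smul', dotProduct_comm]

theorem norm_cross_sq (a b : R3) : ‖cross a b‖ ^ 2 = ‖a‖ ^ 2 * ‖b‖ ^ 2 - ⟪a, b⟫ ^ 2 := by
  simp only [← real_inner_self_eq_norm_sq, inner_eq_dotProduct, cross_def, cross_dot_cross,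
    dotProduct_comm (ofLp b)]
  ring

theorem det3_eq_inner_cross (a b c : R3) : det3 a b c = ⟪cross a b, c⟫ := by
  simp only [det3, cross_def, cross_apply, inner_eq_dotProduct, dotProduct, Fin.sum_univ_three,
    cons_val_zero, cons_val_one, cons_val]
  ring

theorem cross_frame_expansion (u v w : R3) :
    (‖u‖ ^ 2 * ‖v‖ ^ 2 - ⟪u, v⟫ ^ 2) • w =
      (‖v‖ ^ 2 * ⟪u, w⟫ - ⟪u, v⟫ * ⟪v, w⟫) • u + (‖u‖ ^ 2 * ⟪v, w⟫ - ⟪u, v⟫ * ⟪u, w⟫) • v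
        + ⟪cross u v, w⟫ • cross u v := by
  simp only [← real_inner_self_eq_norm_sq, inner_eq_dotProduct, dotProduct, Fin.sum_univ_three,
    cross_def, cross_apply]
  ext i
  fin_cases i <;>
    simp only [Fin.zero_eta, Fin.mk_one, Fin.reduceFinMk, PiLp.smul_apply, PiLp.add_apply,
      smul_eq_mul, cons_val_zero, cons_val_one, cons_val] <;>
    ring

theorem cross_ne_zero {u v : R3} (hu : u ≠ 0) (hv : v ≠ 0) (huv : ⟪u, v⟫ = 0) : cross u v ≠ 0 := by
  rw [← norm_ne_zero_iff, ← pow_ne_zero_iff two_ne_zero, norm_cross_sq, huv]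
  simp [hu, hv]

end R3

open R3

theorem exists_cos_eq_sin_eq {a b : ℝ} (h : a ^ 2 + b ^ 2 = 1) : ∃ θ, cos θ = a ∧ sin θ = b := by
  set z : ℂ := ⟨a, b⟩
  have hz : ‖z‖ = 1 := by rw [Complex.norm_def, Complex.normSq_apply, ← sq, ← sq, h, sqrt_one]
  exact ⟨z.arg, by simpa [hz] using Complex.norm_mul_cos_arg z,
    by simpa [hz] using Complex.norm_mul_sin_arg z⟩

section Calculus

variable {E : Type*} [NormedAddCommGroup E]

theorem eq_of_forall_hasDerivAt_zero [NormedSpace ℝ E] {f : ℝ → E} (hf : ∀ t, HasDerivAt f 0 t)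
    (t s : ℝ) : f t = f s :=
  is_const_of_deriv_eq_zero (fun t => (hf t).differentiableAt) (fun t => (hf t).deriv) t s

theorem inner_add_inner_eq_zero_of_inner_eq_const [InnerProductSpace ℝ E] {f g f' g' : ℝ → E}
    {a : ℝ} (hf : ∀ t, HasDerivAt f (f' t) t) (hg : ∀ t, HasDerivAt g (g' t) t)
    (h : ∀ t, ⟪f t, g t⟫ = a) (t : ℝ) : ⟪f t, g' t⟫ + ⟪f' t, g t⟫ = 0 := by
  have hd := (hf t).inner ℝ (hg t)
  rw [show (fun s => ⟪f s, g s⟫) = fun _ => a from funext h] at hd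
  exact hd.unique (hasDerivAt_const t a)

theorem inner_eq_zero_of_norm_eq_const [InnerProductSpace ℝ E] {f f' : ℝ → E} {a : ℝ}
    (hf : ∀ t, HasDerivAt f (f' t) t) (h : ∀ t, ‖f t‖ = a) (t : ℝ) : ⟪f t, f' t⟫ = 0 := by
  have := inner_add_inner_eq_zero_of_inner_eq_const hf hf (a := a ^ 2)
    (fun s => by rw [real_inner_self_eq_norm_sq, h]) t
  rw [real_inner_comm (f t) (f' t)] at this
  linarith

theorem eq_zero_of_periodic_of_hasDerivAt {φ : ℝ → ℝ} {a l : ℝ} (hφ : Function.Periodic φ l)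
    (hl : 0 < l) (h : ∀ t, HasDerivAt φ a t) : a = 0 := by
  obtain ⟨_, _, hslope⟩ := exists_hasDerivAt_eq_slope φ (fun _ => a) (lt_add_of_pos_right 0 hl)
    (HasDerivAt.continuousOn fun t _ => h t) (fun t _ => h t)
  rwa [hφ 0, sub_self, zero_div] at hslope

theorem eq_cos_smul_add_sin_smul [NormedSpace ℝ E] {x v : ℝ → E} {ω : ℝ} (hω : ω ≠ 0)
    (hx : ∀ t, HasDerivAt x (v t) t) (hv : ∀ t, HasDerivAt v (-ω ^ 2 • x t) t) (t : ℝ) :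
    x t = cos (ω * t) • x 0 + (sin (ω * t) / ω) • v 0 := by
  have hlin : ∀ t, HasDerivAt (ω * ·) ω t := fun t => by
    simpa using (hasDerivAt_id t).const_mul ω
  -- two first integrals of `x'' = -ω² x`, from which `x t` is solved for
  have hF : ∀ s, HasDerivAt (fun s => cos (ω * s) • x s - (sin (ω * s) / ω) • v s) 0 s := by
    intro s
    refine (((hlin s).cos.smul (hx s)).sub (((hlin s).sin.div_const ω).smul (hv s))).congr_deriv ?_
    have e1 : sin (ω * s) / ω * -ω ^ 2 = -sin (ω * s) * ω := by field_simp
    have e2 : cos (ω * s) * ω / ω = cos (ω * s) := by field_simp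
    rw [smul_smul, e1, e2]
    module
  have hG : ∀ s, HasDerivAt (fun s => (ω * sin (ω * s)) • x s + cos (ω * s) • v s) 0 s := by
    intro s
    refine (((hlin s).sin.const_mul ω).smul (hx s)).add ((hlin s).cos.smul (hv s)) |>.congr_deriv ?_
    rw [smul_smul]
    module
  have hF0 := eq_of_forall_hasDerivAt_zero hF t 0
  have hG0 := eq_of_forall_hasDerivAt_zero hG t 0
  simp only [mul_zero, cos_zero, sin_zero, zero_div, zero_smul, one_smul, sub_zero,
    zero_add] at hF0 hG0
  rw [← hF0, ← hG0, smul_sub, smul_add, smul_smul, smul_smul, smul_smul, smul_smul,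
    show sin (ω * t) / ω * (ω * sin (ω * t)) = sin (ω * t) ^ 2 by field_simp]
  linear_combination (norm := module) -(sin_sq_add_cos_sq (ω * t)) • x t

end Calculus

theorem range_circle_eq {C p q : R3} {r : ℝ} (hr : 0 < r) (hp : ‖p‖ = r) (hq : ‖q‖ = r)
    (hpq : ⟪p, q⟫ = 0) :
    Set.range (fun θ => C + cos θ • p + sin θ • q) =
      {x | ⟪x - C, cross p q⟫ = 0 ∧ ‖x - C‖ = r} := by
  have norm_sq : ∀ a b : ℝ, ‖a • p + b • q‖ ^ 2 = (a ^ 2 + b ^ 2) * r ^ 2 := fun a b => by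
    rw [norm_add_sq_real, norm_smul, norm_smul, real_inner_smul_left, real_inner_smul_right, hpq,
      hp, hq, Real.norm_eq_abs, Real.norm_eq_abs, mul_pow, mul_pow, sq_abs, sq_abs]
    ring
  ext x
  simp only [Set.mem_range, Set.mem_ofPred_eq]
  constructor
  · rintro ⟨θ, rfl⟩
    rw [add_assoc, add_sub_cancel_left]
    refine ⟨?_, ?_⟩
    · simp only [inner_add_left, real_inner_smul_left, inner_self_cross, inner_cross_self,
        mul_zero, add_zero]
    · rw [← sq_eq_sq₀ (norm_nonneg _) hr.le, norm_sq, cos_sq_add_sin_sq, one_mul]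
  · rintro ⟨hplane, hnorm⟩
    set a := ⟪p, x - C⟫ / r ^ 2
    set b := ⟪q, x - C⟫ / r ^ 2
    have hexp : x - C = a • p + b • q := by
      have h := cross_frame_expansion p q (x - C)
      rw [hp, hq, hpq, real_inner_comm (x - C) (cross p q), hplane] at h
      apply smul_right_injective R3 (by positivity : r ^ 2 * r ^ 2 ≠ 0)
      simp only [zero_mul, sub_zero, zero_smul, add_zero, ne_eq, OfNat.ofNat_ne_zero,
        not_false_eq_true, zero_pow] at h
      dsimp only
      rw [h, smul_add, smul_smul, smul_smul]
      congr 2 <;> simp only [a, b] <;> field_simp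
    obtain ⟨θ, hcos, hsin⟩ : ∃ θ, cos θ = a ∧ sin θ = b := by
      apply exists_cos_eq_sin_eq
      have := norm_sq a b
      rw [← hexp, hnorm] at this
      exact mul_right_cancel₀ (by positivity : r ^ 2 ≠ 0) (by linarith)
    exact ⟨θ, by rw [hcos, hsin, add_assoc, ← hexp, add_sub_cancel]⟩

section SpaceCurve

variable {γ T N J : ℝ → R3} {κ c : ℝ}

theorem deriv_normal_eq_frenet (hκ : κ ≠ 0) (hT : ∀ t, HasDerivAt T (N t) t)
    (hN : ∀ t, HasDerivAt N (J t) t) (hTnorm : ∀ t, ‖T t‖ = 1) (hNnorm : ∀ t, ‖N t‖ = κ)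
    (hτ : ∀ t, det3 (T t) (N t) (J t) = c) (t : ℝ) :
    J t = -κ ^ 2 • T t + (c / κ ^ 2) • cross (T t) (N t) := by
  have hTN := inner_eq_zero_of_norm_eq_const hT hTnorm
  have hNJ := inner_eq_zero_of_norm_eq_const hN hNnorm t
  have hTJ : ⟪T t, J t⟫ = -κ ^ 2 := by
    have := inner_add_inner_eq_zero_of_inner_eq_const hT hN hTN t
    rw [real_inner_self_eq_norm_sq, hNnorm] at this
    linarith
  have h := cross_frame_expansion (T t) (N t) (J t)
  rw [hTnorm, hNnorm, hTN, hNJ, hTJ, ← det3_eq_inner_cross, hτ] at h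
  apply smul_right_injective R3 (pow_ne_zero 2 hκ)
  dsimp only
  simp only [one_pow, one_mul, ne_eq, OfNat.ofNat_ne_zero, not_false_eq_true, zero_pow, sub_zero,
    zero_mul, mul_zero, zero_smul, add_zero] at h
  rw [h, smul_add, smul_smul, smul_smul, mul_div_cancel₀ _ (pow_ne_zero 2 hκ)]

theorem hasDerivAt_darboux (hκ : κ ≠ 0) (hT : ∀ t, HasDerivAt T (N t) t)
    (hN : ∀ t, HasDerivAt N (J t) t) (hTnorm : ∀ t, ‖T t‖ = 1) (hNnorm : ∀ t, ‖N t‖ = κ)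
    (hτ : ∀ t, det3 (T t) (N t) (J t) = c) (t : ℝ) :
    HasDerivAt (fun s => (c / κ ^ 2) • T s + cross (T s) (N s)) 0 t := by
  refine ((hT t).const_smul (c / κ ^ 2)).add
    (cross.hasDerivAt_of_bilinear (fun _ => hT t) (fun _ => hN t)) |>.congr_deriv ?_
  rw [deriv_normal_eq_frenet hκ hT hN hTnorm hNnorm hτ t, map_add, map_smul, map_smul, cross_self,
    cross_cross, cross_self, inner_eq_zero_of_norm_eq_const hT hTnorm t, real_inner_self_eq_norm_sq,
    hTnorm]
  module

theorem torsion_eq_zero_of_periodic {l : ℝ} (hl : 0 < l) (hper : Function.Periodic γ l)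
    (hγ : ∀ t, HasDerivAt γ (T t) t) (hκ : κ ≠ 0) (hT : ∀ t, HasDerivAt T (N t) t)
    (hN : ∀ t, HasDerivAt N (J t) t) (hTnorm : ∀ t, ‖T t‖ = 1) (hNnorm : ∀ t, ‖N t‖ = κ)
    (hτ : ∀ t, det3 (T t) (N t) (J t) = c) : c = 0 := by
  set D := fun s => (c / κ ^ 2) • T s + cross (T s) (N s)
  have hD : ∀ t, D t = D 0 :=
    (eq_of_forall_hasDerivAt_zero (hasDerivAt_darboux hκ hT hN hTnorm hNnorm hτ) · 0)
  have hslope : c / κ ^ 2 = 0 := by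
    refine eq_zero_of_periodic_of_hasDerivAt (φ := fun s => ⟪γ s, D 0⟫)
      (fun t => by simp only [hper t]) hl fun t => ?_
    refine ((hγ t).inner ℝ (hasDerivAt_const t (D 0))).congr_deriv ?_
    rw [← hD t]
    simp [D, inner_add_right, real_inner_smul_right, inner_self_cross, hTnorm]
  simpa [hκ] using hslope

theorem eq_circle_of_zero_torsion (hκ : κ ≠ 0) (hγ : ∀ t, HasDerivAt γ (T t) t)
    (hT : ∀ t, HasDerivAt T (N t) t) (hN : ∀ t, HasDerivAt N (-κ ^ 2 • T t) t) (t : ℝ) :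
    γ t = γ 0 + (κ ^ 2)⁻¹ • N 0 + cos (κ * t) • (-(κ ^ 2)⁻¹ • N 0) + sin (κ * t) • (κ⁻¹ • T 0) := by
  set C := γ 0 + (κ ^ 2)⁻¹ • N 0 with hCdef
  have hC : ∀ s, γ s - C = -(κ ^ 2)⁻¹ • N s := fun s => by
    have h := eq_of_forall_hasDerivAt_zero (f := fun s => γ s + (κ ^ 2)⁻¹ • N s)
      (fun s => ((hγ s).add ((hN s).const_smul (κ ^ 2)⁻¹)).congr_deriv (by
        rw [smul_smul, mul_neg, inv_mul_cancel₀ (pow_ne_zero 2 hκ)]; module)) s 0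
    rw [hCdef, ← h]
    module
  have hx := eq_cos_smul_add_sin_smul hκ (x := fun s => γ s - C) (v := T)
    (fun s => (hγ s).sub_const C) (fun s => (hT s).congr_deriv (by
      rw [hC s, smul_smul, neg_mul_neg, mul_inv_cancel₀ (pow_ne_zero 2 hκ), one_smul])) t
  rw [hC 0] at hx
  linear_combination (norm := module) hx

end SpaceCurve

theorem constant_curvature_torsion_closed_curve_is_circle_general
    (l : ℝ) (hl : 0 < l) (γ : ℝ → R3)
    (hγ : ∀ t, AnalyticAt ℝ γ t) (hper : ∀ t, γ (t + l) = γ t)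
    (hunit : ∀ t, ‖deriv γ t‖ = 1)
    (κ₀ : ℝ) (hκ₀ : 0 < κ₀) (hκ : ∀ t, ‖deriv (deriv γ) t‖ = κ₀)
    (c₀ : ℝ)
    (hτ : ∀ t, det3 (deriv γ t) (deriv (deriv γ) t) (deriv (deriv (deriv γ)) t) = c₀) :
    c₀ = 0 ∧ ∃ (center w : R3) (r : ℝ), w ≠ 0 ∧ 0 < r ∧
      Set.range γ =
        {x : R3 | inner ℝ (x - center) w = (0 : ℝ) ∧ ‖x - center‖ = r} := by
  have hγ' : ∀ t, HasDerivAt γ (deriv γ t) t := fun t => (hγ t).differentiableAt.hasDerivAt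
  have hT : ∀ t, HasDerivAt (deriv γ) (deriv (deriv γ) t) t :=
    fun t => (hγ t).deriv.differentiableAt.hasDerivAt
  have hN : ∀ t, HasDerivAt (deriv (deriv γ)) (deriv (deriv (deriv γ)) t) t :=
    fun t => (hγ t).deriv.deriv.differentiableAt.hasDerivAt
  obtain rfl : c₀ = 0 := torsion_eq_zero_of_periodic hl hper hγ' hκ₀.ne' hT hN hunit hκ hτ
  have hN' : ∀ t, HasDerivAt (deriv (deriv γ)) (-κ₀ ^ 2 • deriv γ t) t := fun t => by
    simpa [deriv_normal_eq_frenet hκ₀.ne' hT hN hunit hκ hτ t] using hN t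
  set p := -(κ₀ ^ 2)⁻¹ • deriv (deriv γ) 0
  set q := κ₀⁻¹ • deriv γ 0
  have hp : ‖p‖ = κ₀⁻¹ := by
    rw [norm_smul, hκ 0, norm_neg, norm_inv, norm_pow, Real.norm_of_nonneg hκ₀.le]; field_simp
  have hq : ‖q‖ = κ₀⁻¹ := by rw [norm_smul, hunit 0, norm_inv, Real.norm_of_nonneg hκ₀.le, mul_one]
  have hpq : ⟪p, q⟫ = 0 := by
    rw [real_inner_smul_left, real_inner_smul_right, real_inner_comm,
      inner_eq_zero_of_norm_eq_const hT hunit 0, mul_zero, mul_zero]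
  have hne : ∀ v : R3, ‖v‖ = κ₀⁻¹ → v ≠ 0 := fun v hv => by
    rw [← norm_ne_zero_iff, hv]; positivity
  refine ⟨rfl, γ 0 + (κ₀ ^ 2)⁻¹ • deriv (deriv γ) 0, cross p q, κ₀⁻¹,
    cross_ne_zero (hne p hp) (hne q hq) hpq, by positivity, ?_⟩
  rw [← range_circle_eq (inv_pos.2 hκ₀) hp hq hpq,
    ← (mul_left_surjective₀ hκ₀.ne').range_comp fun θ => _ + cos θ • p + sin θ • q]
  exact congrArg Set.range (funext (eq_circle_of_zero_torsion hκ₀.ne' hγ' hT hN'))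

/-- Let `γ : ℝ → ℝ³` be a real analytic, `l`-periodic, unit-speed curve, injective
on `[0,l)`, with constant curvature `‖γ''‖ = κ₀ > 0` and constant
`det(γ', γ'', γ''') = c₀` (so constant torsion).  Then `c₀ = 0` and the image of `γ`
is a circle contained in a plane: the set of points of a plane at a fixed positive
distance from a fixed point of that plane. -/
theorem constant_curvature_torsion_closed_curve_is_circle
    (l : ℝ) (hl : 0 < l) (γ : ℝ → R3)
    (hγ : ∀ t, AnalyticAt ℝ γ t) (hper : ∀ t, γ (t + l) = γ t)
    (hinj : Set.InjOn γ (Set.Ico 0 l)) (hunit : ∀ t, ‖deriv γ t‖ = 1)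
    (κ₀ : ℝ) (hκ₀ : 0 < κ₀) (hκ : ∀ t, ‖deriv (deriv γ) t‖ = κ₀)
    (c₀ : ℝ)
    (hτ : ∀ t, det3 (deriv γ t) (deriv (deriv γ) t) (deriv (deriv (deriv γ)) t) = c₀) :
    c₀ = 0 ∧ ∃ (center w : R3) (r : ℝ), w ≠ 0 ∧ 0 < r ∧
      Set.range γ =
        {x : R3 | inner ℝ (x - center) w = (0 : ℝ) ∧ ‖x - center‖ = r} :=
  constant_curvature_torsion_closed_curve_is_circle_general l hl γ hγ hper hunit κ₀ hκ₀ hκ c₀ hτ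
end
end
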